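/- arXiv:2312.08121 — 2 statements merged into one kernel-verified Lean document; each statement's English description precedes it below -/
import Mathlib

section
/- (Phase transition, zero-mean phase.) Let (X_n)_{n∈ℤ} be a stationary and ergodic integer-valued sequence with E[|X_0|] < ∞ and E[X_0] = 0. Then almost surely the record graph is connected (for all i, j ∈ ℤ there exist n, m ≥ 0 with R_X^n(i) = R_X^m(j)); in particular, almost surely the record component C(0) = {j ∈ ℤ : R_X^a(j) = R_X^b(0) for some a, b ≥ 0} is infinite. -/
attribute [local instance] Classical.propDecidable

/-- The record map of an integer sequence: `n` is sent to the least integer `j > n`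
with `∑_{l=n}^{j-1} x l ≥ 0` if such `j` exists, and to `n` otherwise. -/
noncomputable def recordMap (x : ℤ → ℤ) (n : ℤ) : ℤ :=
  if ∃ j : ℤ, n < j ∧ 0 ≤ ∑ l ∈ Finset.Ico n j, x l then
    sInf {j : ℤ | n < j ∧ 0 ≤ ∑ l ∈ Finset.Ico n j, x l}
  else n

open MeasureTheory ProbabilityTheory Filter Topology


lemma sum_Ico_glue (x : ℤ → ℤ) {a b c : ℤ} (h1 : a ≤ b) (h2 : b ≤ c) :
    ∑ l ∈ Finset.Ico a b, x l + ∑ l ∈ Finset.Ico b c, x l = ∑ l ∈ Finset.Ico a c, x l := by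
  rw [← Finset.sum_union (Finset.Ico_disjoint_Ico_consecutive a b c),
    Finset.Ico_union_Ico_eq_Ico h1 h2]

section Det

variable {x : ℤ → ℤ} (hx : ∀ n : ℤ, ∃ j : ℤ, n < j ∧ 0 ≤ ∑ l ∈ Finset.Ico n j, x l)

local notation "R" => recordMap x

include hx

lemma recordMap_spec (n : ℤ) :
    n < R n ∧ 0 ≤ ∑ l ∈ Finset.Ico n (R n), x l ∧
      ∀ m, n < m → m < R n → ∑ l ∈ Finset.Ico n m, x l < 0 := by
  have hne : {j : ℤ | n < j ∧ 0 ≤ ∑ l ∈ Finset.Ico n j, x l}.Nonempty := hx n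
  have hbdd : BddBelow {j : ℤ | n < j ∧ 0 ≤ ∑ l ∈ Finset.Ico n j, x l} :=
    ⟨n, fun j hj => le_of_lt hj.1⟩
  have hR : R n = sInf {j : ℤ | n < j ∧ 0 ≤ ∑ l ∈ Finset.Ico n j, x l} := if_pos (hx n)
  have hmem := Int.csInf_mem hne hbdd
  rw [← hR] at hmem
  refine ⟨hmem.1, hmem.2, fun m hm hmR => ?_⟩
  by_contra h
  push_neg at h
  have : R n ≤ m := by
    rw [hR]; exact csInf_le hbdd ⟨hm, h⟩
  omega

lemma recordMap_lt (n : ℤ) : n < R n := (recordMap_spec hx n).1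

lemma recordMap_sum_nonneg (n : ℤ) : 0 ≤ ∑ l ∈ Finset.Ico n (R n), x l :=
  (recordMap_spec hx n).2.1

lemma recordMap_sum_neg {n m : ℤ} (h1 : n < m) (h2 : m < R n) :
    ∑ l ∈ Finset.Ico n m, x l < 0 := (recordMap_spec hx n).2.2 m h1 h2

/-- Merging lemma: if `u` lies strictly between `t` and `R t`, the orbits of `u` and `t` meet. -/
lemma merge (t : ℤ) : ∀ d : ℕ, ∀ u : ℤ, t < u → u < R t → R t - u ≤ (d : ℤ) →
    ∃ a b : ℕ, R^[a] u = R^[b] t := by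
  intro d
  induction d with
  | zero => intro u h1 h2 h3; omega
  | succ d ih =>
    intro u h1 h2 h3
    have hu' : u < R u := recordMap_lt hx u
    rcases lt_trichotomy (R u) (R t) with hlt | heq | hgt
    · -- R u < R t : induct
      have h1' : t < R u := h1.trans hu'
      obtain ⟨a, b, hab⟩ := ih (R u) h1' hlt (by omega)
      exact ⟨a + 1, b, by rw [Function.iterate_succ_apply]; exact hab⟩
    · exact ⟨1, 1, by simpa using heq⟩
    · -- R u > R t : contradiction
      exfalso
      have hytu : ∑ l ∈ Finset.Ico t u, x l < 0 := recordMap_sum_neg hx h1 h2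
      have hsplit : ∑ l ∈ Finset.Ico t u, x l + ∑ l ∈ Finset.Ico u (R t), x l
          = ∑ l ∈ Finset.Ico t (R t), x l :=
        sum_Ico_glue x h1.le h2.le
      have h2' : ∑ l ∈ Finset.Ico u (R t), x l < 0 := recordMap_sum_neg hx h2 hgt
      have := recordMap_sum_nonneg hx t
      omega

lemma iterate_le (i : ℤ) (k : ℕ) : i + k ≤ R^[k] i := by
  induction k with
  | zero => simp
  | succ k ih =>
    rw [Function.iterate_succ_apply']
    have := recordMap_lt hx (R^[k] i)
    push_cast
    omega

lemma connect_le {i j : ℤ} (hij : i ≤ j) : ∃ a b : ℕ, R^[a] i = R^[b] j := by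
  have hP : ∃ k : ℕ, j ≤ R^[k] i := by
    refine ⟨(j - i).toNat, ?_⟩
    have := iterate_le hx i (j - i).toNat
    omega
  classical
  let k := Nat.find hP
  have hk : j ≤ R^[k] i := Nat.find_spec hP
  rcases eq_or_lt_of_le hk with heq | hlt
  · exact ⟨k, 0, heq.symm⟩
  · -- j < R^[k] i
    have hk0 : k ≠ 0 := by
      intro h0
      rw [h0] at hlt
      simp at hlt
      omega
    obtain ⟨k', hkk⟩ : ∃ k', k = k' + 1 := ⟨k - 1, by omega⟩
    have hmin : ¬ j ≤ R^[k'] i := Nat.find_min hP (by omega)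
    push_neg at hmin
    have hRt : R (R^[k'] i) = R^[k' + 1] i := (Function.iterate_succ_apply' _ _ _).symm
    have h2 : j < R (R^[k'] i) := by rw [hRt, ← hkk]; exact hlt
    obtain ⟨a, b, hab⟩ := merge hx (R^[k'] i) (R (R^[k'] i) - j).toNat j hmin h2 (by omega)
    refine ⟨b + k', a, ?_⟩
    rw [Function.iterate_add_apply, hab]

lemma connect (i j : ℤ) : ∃ a b : ℕ, R^[a] i = R^[b] j := by
  rcases le_total i j with h | h
  · exact connect_le hx h
  · obtain ⟨a, b, hab⟩ := connect_le hx h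
    exact ⟨b, a, hab.symm⟩

lemma component_infinite :
    {j : ℤ | ∃ a b : ℕ, R^[a] j = R^[b] (0 : ℤ)}.Infinite := by
  have hsm : StrictMono (fun k : ℕ => R^[k] (0 : ℤ)) := by
    apply strictMono_nat_of_lt_succ
    intro n
    rw [Function.iterate_succ_apply']
    exact recordMap_lt hx _
  exact Set.infinite_of_injective_forall_mem (f := fun k : ℕ => R^[k] (0 : ℤ))
    hsm.injective (fun k => ⟨0, k, rfl⟩)

end Det

noncomputable section

lemma sum_Ico_glue' (x : ℤ → ℤ) {a b c : ℤ} (h1 : a ≤ b) (h2 : b ≤ c) :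
    ∑ l ∈ Finset.Ico a b, x l + ∑ l ∈ Finset.Ico b c, x l = ∑ l ∈ Finset.Ico a c, x l := by
  rw [← Finset.sum_union (Finset.Ico_disjoint_Ico_consecutive a b c),
    Finset.Ico_union_Ico_eq_Ico h1 h2]

/-- The shift map on two-sided sequences. -/
def shiftZ (k : ℤ) : (ℤ → ℤ) → (ℤ → ℤ) := fun g n => g (n + k)

/-- Partial sums `S_m = ∑_{0 ≤ l < m} g l`. -/
def SS (m : ℕ) (g : ℤ → ℤ) : ℤ := ∑ l ∈ Finset.Ico (0 : ℤ) (m : ℤ), g l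

lemma sum_shift (g : ℤ → ℤ) (n : ℤ) (a b : ℤ) :
    ∑ l ∈ Finset.Ico a b, g (l + n) = ∑ l ∈ Finset.Ico (a + n) (b + n), g l := by
  rw [← Finset.map_add_right_Ico a b n, Finset.sum_map]
  rfl

lemma SS_zero (g : ℤ → ℤ) : SS 0 g = 0 := by simp [SS]

lemma SS_succ (m : ℕ) (g : ℤ → ℤ) : SS (m + 1) g = g 0 + SS m (shiftZ 1 g) := by
  have h0 : Finset.Ico (0 : ℤ) 1 = {0} := by ext z; simp [Finset.mem_Ico]; omega
  have hm : (0:ℤ) ≤ (m:ℤ) := Int.ofNat_nonneg m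
  have hglue : ∑ l ∈ Finset.Ico (0:ℤ) 1, g l + ∑ l ∈ Finset.Ico (1:ℤ) ((m:ℤ)+1), g l
      = ∑ l ∈ Finset.Ico (0:ℤ) ((m:ℤ)+1), g l :=
    sum_Ico_glue' g (by norm_num) (by omega)
  have h2 : SS m (shiftZ 1 g) = ∑ l ∈ Finset.Ico (1:ℤ) ((m:ℤ)+1), g l := by
    show (∑ l ∈ Finset.Ico (0:ℤ) (m:ℤ), g (l+1)) = _
    rw [sum_shift g 1 0 (m:ℤ)]
    norm_num
  have h3 : SS (m+1) g = ∑ l ∈ Finset.Ico (0:ℤ) ((m:ℤ)+1), g l := by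
    show (∑ l ∈ Finset.Ico (0:ℤ) ((m+1:ℕ):ℤ), g l) = _
    congr 1
  rw [h3, h2, ← hglue, h0, Finset.sum_singleton]

lemma SS_shift (n : ℕ) (m : ℕ) (g : ℤ → ℤ) :
    SS m (shiftZ (n : ℤ) g) = SS (n + m) g - SS n g := by
  have h1 : SS m (shiftZ (n : ℤ) g) = ∑ l ∈ Finset.Ico (0 : ℤ) (m : ℤ), g (l + n) := rfl
  rw [h1, sum_shift g n 0 (m : ℤ)]
  have hglue := sum_Ico_glue' g (by positivity : (0:ℤ) ≤ (n:ℤ))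
    (by push_cast; omega : (n:ℤ) ≤ ((n + m : ℕ) : ℤ))
  have hc : (0 : ℤ) + (n : ℤ) = (n : ℤ) := by ring
  have hc2 : (m : ℤ) + (n : ℤ) = ((n + m : ℕ) : ℤ) := by push_cast; ring
  rw [hc, hc2]
  show _ = (∑ l ∈ Finset.Ico (0:ℤ) ((n+m:ℕ):ℤ), g l) - (∑ l ∈ Finset.Ico (0:ℤ) (n:ℤ), g l)
  omega

lemma shiftZ_iterate (n : ℕ) (g : ℤ → ℤ) : (shiftZ 1)^[n] g = shiftZ (n : ℤ) g := by
  induction n with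
  | zero => funext k; simp [shiftZ]
  | succ n ih =>
    rw [Function.iterate_succ_apply', ih]
    funext k
    show g (k + 1 + n) = g (k + (n + 1 : ℕ))
    congr 1
    push_cast; ring

end

noncomputable section

/-- The "frozen at 0" event: all forward partial sums are negative. -/
def Aset : Set (ℤ → ℤ) := {g | ∀ j : ℤ, 0 < j → ∑ l ∈ Finset.Ico (0 : ℤ) j, g l < 0}

lemma mem_Aset_iff (g : ℤ → ℤ) : g ∈ Aset ↔ ∀ m : ℕ, 0 < m → SS m g < 0 := by
  constructor
  · intro h m hm
    exact h (m : ℤ) (by exact_mod_cast hm)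
  · intro h j hj
    have h1 := h j.toNat (by omega)
    have h2 : ((j.toNat : ℕ) : ℤ) = j := Int.toNat_of_nonneg hj.le
    rw [SS, h2] at h1
    exact h1

/-- The event that the partial sums tend to `-∞`. -/
def Dset : Set (ℤ → ℤ) := {g | ∀ B : ℤ, ∃ N : ℕ, ∀ m : ℕ, N ≤ m → SS m g ≤ B}

lemma Dset_inv : (shiftZ 1) ⁻¹' Dset = Dset := by
  ext g
  simp only [Set.mem_preimage, Dset, Set.mem_setOf_eq]
  constructor
  · intro h B
    obtain ⟨N, hN⟩ := h (B - g 0)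
    refine ⟨N + 1, fun m hm => ?_⟩
    obtain ⟨m', rfl⟩ : ∃ m', m = m' + 1 := ⟨m - 1, by omega⟩
    have h1 := hN m' (by omega)
    have hrel := SS_succ m' g
    omega
  · intro h B
    obtain ⟨N, hN⟩ := h (B + g 0)
    refine ⟨N, fun m hm => ?_⟩
    have h1 := hN (m + 1) (by omega)
    have hrel := SS_succ m g
    omega

/-- Truncated supremum of partial sums. -/
def Wc (c : ℕ) (g : ℤ → ℤ) : ℤ := sSup (Set.range fun m : ℕ => min (c : ℤ) (SS m g))

lemma Wc_bddAbove (c : ℕ) (g : ℤ → ℤ) :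
    BddAbove (Set.range fun m : ℕ => min (c : ℤ) (SS m g)) := by
  refine ⟨(c : ℤ), ?_⟩
  rintro z ⟨m, rfl⟩
  exact min_le_left _ _

lemma Wc_exists (c : ℕ) (g : ℤ → ℤ) : ∃ m : ℕ, Wc c g = min (c : ℤ) (SS m g) := by
  have := Int.csSup_mem (Set.range_nonempty _) (Wc_bddAbove c g)
  obtain ⟨m, hm⟩ := this
  exact ⟨m, hm.symm⟩

lemma Wc_ge (c : ℕ) (g : ℤ → ℤ) (m : ℕ) : min (c : ℤ) (SS m g) ≤ Wc c g :=
  le_csSup (Wc_bddAbove c g) (Set.mem_range_self m)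

lemma Wc_nonneg (c : ℕ) (g : ℤ → ℤ) : 0 ≤ Wc c g := by
  have h := Wc_ge c g 0
  rw [SS_zero] at h
  have : (0:ℤ) ≤ (c:ℤ) := Int.ofNat_nonneg c
  omega

lemma Wc_le_c (c : ℕ) (g : ℤ → ℤ) : Wc c g ≤ (c : ℤ) := by
  obtain ⟨m, hm⟩ := Wc_exists c g
  rw [hm]; exact min_le_left _ _

lemma Wc_le_bound (c : ℕ) (g : ℤ → ℤ) {M : ℤ} (h : ∀ m : ℕ, SS m g ≤ M) (hM : 0 ≤ M) :
    Wc c g ≤ M := by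
  obtain ⟨m, hm⟩ := Wc_exists c g
  rw [hm]
  have := h m
  omega

/-- The key pointwise supermartingale-type inequality. -/
lemma Wc_key (c : ℕ) (g : ℤ → ℤ) :
    min (c : ℤ) (g 0 + (if g ∈ Aset then (1:ℤ) else 0) + Wc c (shiftZ 1 g)) ≤ Wc c g := by
  obtain ⟨m, hm⟩ := Wc_exists c (shiftZ 1 g)
  have hrel := SS_succ m g
  have h1 : min (c : ℤ) (SS (m + 1) g) ≤ Wc c g := Wc_ge c g (m + 1)
  by_cases hA : g ∈ Aset
  · rw [if_pos hA]
    have hneg : SS (m + 1) g < 0 := (mem_Aset_iff g).1 hA (m + 1) (Nat.succ_pos m)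
    have h0 : 0 ≤ Wc c g := Wc_nonneg c g
    have hm' : Wc c (shiftZ 1 g) ≤ SS m (shiftZ 1 g) := by
      rw [hm]; exact min_le_right _ _
    omega
  · rw [if_neg hA, hm]
    omega

end

section Meas

lemma measurableSet_int (s : Set ℤ) : MeasurableSet s := trivial

lemma measurable_SS (m : ℕ) : Measurable (SS m) :=
  Finset.measurable_sum _ (fun l _ => measurable_pi_apply l)

lemma measurable_shiftZ (k : ℤ) : Measurable (shiftZ k) :=
  measurable_pi_lambda _ (fun n => measurable_pi_apply (n + k))

lemma measurable_Aset : MeasurableSet Aset := by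
  have h : Aset = ⋂ m : ℕ, {g : ℤ → ℤ | 0 < m → SS m g < 0} := by
    ext g
    simp only [Set.mem_iInter, Set.mem_setOf_eq]
    exact mem_Aset_iff g
  rw [h]
  refine MeasurableSet.iInter fun m => ?_
  by_cases hm : 0 < m
  · simp only [hm, forall_true_left]
    exact measurable_SS m (measurableSet_int {z | z < 0})
  · simp only [hm]
    simp

lemma measurable_Dset : MeasurableSet Dset := by
  have h : Dset = ⋂ B : ℤ, ⋃ N : ℕ, ⋂ m : ℕ, {g : ℤ → ℤ | N ≤ m → SS m g ≤ B} := by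
    ext g
    simp only [Set.mem_iInter, Set.mem_iUnion, Set.mem_setOf_eq, Dset]
  rw [h]
  refine MeasurableSet.iInter fun B => MeasurableSet.iUnion fun N =>
    MeasurableSet.iInter fun m => ?_
  by_cases hm : N ≤ m
  · simp only [hm, forall_true_left]
    exact measurable_SS m (measurableSet_int {z | z ≤ B})
  · simp only [hm]
    simp

lemma measurable_Wc (c : ℕ) : Measurable (Wc c) := by
  have hle : ∀ k : ℤ, {g : ℤ → ℤ | Wc c g ≤ k} = ⋂ m : ℕ, {g | min (c:ℤ) (SS m g) ≤ k} := by
    intro k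
    ext g
    simp only [Set.mem_setOf_eq, Set.mem_iInter]
    rw [Wc, csSup_le_iff (Wc_bddAbove c g) (Set.range_nonempty _)]
    simp
  have hlem : ∀ k : ℤ, MeasurableSet {g : ℤ → ℤ | Wc c g ≤ k} := by
    intro k
    rw [hle k]
    exact MeasurableSet.iInter fun m =>
      measurable_SS m (measurableSet_int {z | min (c:ℤ) z ≤ k})
  apply measurable_to_countable'
  intro k
  have h : (Wc c) ⁻¹' {k} = {g : ℤ → ℤ | Wc c g ≤ k} \ {g : ℤ → ℤ | Wc c g ≤ k - 1} := by
    ext g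
    simp only [Set.mem_preimage, Set.mem_singleton_iff, Set.mem_diff, Set.mem_setOf_eq]
    omega
  rw [h]
  exact (hlem k).diff (hlem (k - 1))

end Meas

section Recur

lemma shiftZ_zero (g : ℤ → ℤ) : shiftZ 0 g = g := by
  funext k; simp [shiftZ]

lemma frozen_step {g : ℤ → ℤ} {n : ℕ} (h : shiftZ (n : ℤ) g ∈ Aset) {m : ℕ} (hm : n < m) :
    SS m g ≤ SS n g - 1 := by
  have h1 : SS (m - n) (shiftZ (n : ℤ) g) < 0 :=
    (mem_Aset_iff _).1 h (m - n) (by omega)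
  have h2 := SS_shift n (m - n) g
  have h3 : n + (m - n) = m := by omega
  rw [h3] at h2
  omega

lemma freq_frozen_mem_Dset {g : ℤ → ℤ} (hg : g ∈ Aset)
    (hfreq : ∃ᶠ n in atTop, (shiftZ 1)^[n] g ∈ Aset) : g ∈ Dset := by
  have hfreq' : ∀ a : ℕ, ∃ n ≥ a, shiftZ (n : ℤ) g ∈ Aset := by
    intro a
    obtain ⟨n, hn, hmem⟩ := frequently_atTop.mp hfreq a
    rw [shiftZ_iterate] at hmem
    exact ⟨n, hn, hmem⟩
  have hchain : ∀ k : ℕ, ∃ n : ℕ, shiftZ (n : ℤ) g ∈ Aset ∧ SS n g ≤ -(k : ℤ) := by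
    intro k
    induction k with
    | zero =>
      refine ⟨0, ?_, by simp [SS_zero]⟩
      show shiftZ ((0:ℕ) : ℤ) g ∈ Aset
      rw [Nat.cast_zero, shiftZ_zero]
      exact hg
    | succ k ih =>
      obtain ⟨n, hfz, hle⟩ := ih
      obtain ⟨n', hn', hfz'⟩ := hfreq' (n + 1)
      refine ⟨n', hfz', ?_⟩
      have := frozen_step hfz (show n < n' by omega)
      push_cast
      omega
  intro B
  obtain ⟨n, hfz, hle⟩ := hchain (-B).toNat
  refine ⟨n + 1, fun m hm => ?_⟩
  have h1 := frozen_step hfz (show n < m by omega)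
  omega

end Recur

section HsetSec

lemma Dset_bound {g : ℤ → ℤ} (hg : g ∈ Dset) : ∃ M : ℤ, 0 ≤ M ∧ ∀ m : ℕ, SS m g ≤ M := by
  obtain ⟨N, hN⟩ := hg 0
  have hfin : ∀ K : ℕ, ∃ M : ℤ, 0 ≤ M ∧ ∀ m : ℕ, m < K → SS m g ≤ M := by
    intro K
    induction K with
    | zero => exact ⟨0, le_refl _, fun m hm => absurd hm (by omega)⟩
    | succ K ih =>
      obtain ⟨M, hM0, hM⟩ := ih
      refine ⟨max M (SS K g), by omega, fun m hm => ?_⟩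
      rcases Nat.lt_succ_iff_lt_or_eq.mp hm with h | h
      · have := hM m h; omega
      · subst h; omega
  obtain ⟨M, hM0, hM⟩ := hfin N
  refine ⟨M, hM0, fun m => ?_⟩
  by_cases h : m < N
  · exact hM m h
  · have := hN m (by omega); omega

/-- The good event: from every time there is a later time with nonnegative sum. -/
def Hset : Set (ℤ → ℤ) :=
  {g | ∀ n : ℤ, ∃ j : ℤ, n < j ∧ 0 ≤ ∑ l ∈ Finset.Ico n j, g l}

lemma shiftZ_mem_Aset_iff (g : ℤ → ℤ) (n : ℤ) :
    shiftZ n g ∈ Aset ↔ ∀ j : ℤ, n < j → ∑ l ∈ Finset.Ico n j, g l < 0 := by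
  constructor
  · intro h j hj
    have h1 := h (j - n) (by omega)
    have h2 : ∑ l ∈ Finset.Ico (0:ℤ) (j - n), (shiftZ n g) l
        = ∑ l ∈ Finset.Ico n j, g l := by
      show (∑ l ∈ Finset.Ico (0:ℤ) (j - n), g (l + n)) = _
      rw [sum_shift g n 0 (j - n)]
      congr 1 <;> ring
    rwa [h2] at h1
  · intro h j hj
    have h2 : ∑ l ∈ Finset.Ico (0:ℤ) j, (shiftZ n g) l
        = ∑ l ∈ Finset.Ico n (j + n), g l := by
      show (∑ l ∈ Finset.Ico (0:ℤ) j, g (l + n)) = _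
      rw [sum_shift g n 0 j]
      congr 1
      ring
    show ∑ l ∈ Finset.Ico (0:ℤ) j, (shiftZ n g) l < 0
    rw [h2]
    exact h (j + n) (by omega)

lemma Hset_compl : Hsetᶜ = ⋃ n : ℤ, (shiftZ n) ⁻¹' Aset := by
  ext g
  simp only [Set.mem_compl_iff, Hset, Set.mem_setOf_eq, Set.mem_iUnion, Set.mem_preimage]
  push_neg
  constructor
  · rintro ⟨n, hn⟩
    refine ⟨n, (shiftZ_mem_Aset_iff g n).2 fun j hj => ?_⟩
    have := hn j hj
    omega
  · rintro ⟨n, hn⟩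
    refine ⟨n, fun j hj => ?_⟩
    have := (shiftZ_mem_Aset_iff g n).1 hn j hj
    omega

lemma measurable_Hset : MeasurableSet Hset := by
  have h : Hset = (⋃ n : ℤ, (shiftZ n) ⁻¹' Aset)ᶜ := by
    rw [← Hset_compl, compl_compl]
  rw [h]
  exact (MeasurableSet.iUnion fun n => measurable_shiftZ n measurable_Aset).compl

end HsetSec


/-- Phase transition, zero-mean phase: for a stationary ergodic integrable integer
sequence with `E[X_0] = 0`, almost surely the record graph is connected; in particular
the record component of `0` is infinite. -/
theorem stationary_record_zero_mean
    {Ω : Type*} [MeasureSpace Ω] [IsProbabilityMeasure (ℙ : Measure Ω)]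
    (X : ℤ → Ω → ℤ) (hmeas : ∀ n, Measurable (X n))
    (hstat : ∀ k : ℤ, Measure.map (fun ω => fun n : ℤ => X (n + k) ω) ℙ =
      Measure.map (fun ω => fun n : ℤ => X n ω) ℙ)
    (herg : ∀ A : Set (ℤ → ℤ), MeasurableSet A →
      (fun f : ℤ → ℤ => fun n : ℤ => f (n + 1)) ⁻¹' A = A →
      Measure.map (fun ω => fun n : ℤ => X n ω) ℙ A = 0 ∨
        Measure.map (fun ω => fun n : ℤ => X n ω) ℙ A = 1)
    (hint : Integrable (fun ω => (X 0 ω : ℝ)) ℙ)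
    (hmean : ∫ ω, (X 0 ω : ℝ) ∂ℙ = 0) :
    ∀ᵐ ω ∂ℙ,
      (∀ i j : ℤ, ∃ n m : ℕ,
        (recordMap (fun l => X l ω))^[n] i = (recordMap (fun l => X l ω))^[m] j) ∧
      {j : ℤ | ∃ a b : ℕ,
        (recordMap (fun l => X l ω))^[a] j = (recordMap (fun l => X l ω))^[b] 0}.Infinite := by
  have hXm : Measurable (fun ω => fun n : ℤ => X n ω) := measurable_pi_lambda _ hmeas
  set μ := Measure.map (fun ω => fun n : ℤ => X n ω) ℙ with hμ
  have hprob : IsProbabilityMeasure μ := Measure.isProbabilityMeasure_map hXm.aemeasurable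
  have hpres : ∀ k : ℤ, Measure.map (shiftZ k) μ = μ := by
    intro k
    rw [hμ, Measure.map_map (measurable_shiftZ k) hXm]
    have hcomp : (shiftZ k) ∘ (fun ω => fun n : ℤ => X n ω)
        = fun ω => fun n : ℤ => X (n + k) ω := rfl
    rw [hcomp, hstat k, hμ]
  have hT : MeasurePreserving (shiftZ 1) μ μ := ⟨measurable_shiftZ 1, hpres 1⟩
  -- the coordinate function and its properties
  have hfmeas : Measurable (fun g : ℤ → ℤ => (g 0 : ℝ)) :=
    measurable_from_top.comp (measurable_pi_apply 0)
  have hfint : Integrable (fun g : ℤ → ℤ => (g 0 : ℝ)) μ := by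
    rw [hμ]
    exact (integrable_map_measure hfmeas.aestronglyMeasurable hXm.aemeasurable).2 hint
  have hfmean : ∫ g, (g 0 : ℝ) ∂μ = 0 := by
    rw [hμ, integral_map hXm.aemeasurable hfmeas.aestronglyMeasurable]
    exact hmean
  -- main claim: the frozen event has measure zero
  have hA0 : μ Aset = 0 := by
    by_contra hA
    -- Poincaré recurrence: a.e. point of Aset returns to Aset infinitely often
    have hcons : Conservative (shiftZ 1) μ := hT.conservative
    have hrec := hcons.ae_mem_imp_frequently_image_mem measurable_Aset.nullMeasurableSet
    have hAD : ∀ᵐ g ∂μ, g ∈ Aset → g ∈ Dset :=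
      hrec.mono fun g h hg => freq_frozen_mem_Dset hg (h hg)
    have hD1 : μ Dset = 1 := by
      rcases herg Dset measurable_Dset Dset_inv with h0 | h1
      · exfalso
        have hle : μ Aset ≤ μ Dset := measure_mono_ae hAD
        rw [h0] at hle
        exact hA (le_antisymm hle zero_le)
      · exact h1
    have haeD : ∀ᵐ g ∂μ, g ∈ Dset := by
      rw [ae_iff]
      have : {g : ℤ → ℤ | ¬ g ∈ Dset} = Dsetᶜ := rfl
      rw [this, measure_compl measurable_Dset (measure_ne_top μ _), hD1, measure_univ]
      simp
    set p := (μ Aset).toReal with hp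
    have hppos : 0 < p := ENNReal.toReal_pos hA (measure_ne_top μ _)
    set ind : (ℤ → ℤ) → ℝ := Aset.indicator (fun _ => (1:ℝ)) with hind
    have hindmeas : Measurable ind := (measurable_const.indicator measurable_Aset)
    have hindint : Integrable ind μ := (integrable_const (1:ℝ)).indicator measurable_Aset
    have hindval : ∫ g, ind g ∂μ = p := by
      rw [hind, hp]
      exact integral_indicator_one measurable_Aset
    have hind01 : ∀ g, 0 ≤ ind g ∧ ind g ≤ 1 := by
      intro g
      by_cases h : g ∈ Aset <;> simp [hind, h]
    -- truncated suprema
    have hwcmeas : ∀ c : ℕ, Measurable (fun g => (Wc c g : ℝ)) :=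
      fun c => measurable_from_top.comp (measurable_Wc c)
    have hwcbd : ∀ (c : ℕ) (g : ℤ → ℤ), (0:ℝ) ≤ (Wc c g : ℝ) ∧ (Wc c g : ℝ) ≤ (c : ℝ) := by
      intro c g
      constructor
      · exact_mod_cast Wc_nonneg c g
      · exact_mod_cast Wc_le_c c g
    have hwcint : ∀ c : ℕ, Integrable (fun g => (Wc c g : ℝ)) μ := by
      intro c
      refine Integrable.mono' (integrable_const (c:ℝ)) (hwcmeas c).aestronglyMeasurable
        (Filter.Eventually.of_forall fun g => ?_)
      have := hwcbd c g
      rw [Real.norm_eq_abs, abs_le]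
      constructor <;> [linarith [Nat.cast_nonneg (α := ℝ) c]; linarith]
    have hwcTmeas : ∀ c, Measurable (fun g => (Wc c (shiftZ 1 g) : ℝ)) :=
      fun c => (hwcmeas c).comp (measurable_shiftZ 1)
    have hwcTint : ∀ c, Integrable (fun g => (Wc c (shiftZ 1 g) : ℝ)) μ := by
      intro c
      refine Integrable.mono' (integrable_const (c:ℝ)) (hwcTmeas c).aestronglyMeasurable
        (Filter.Eventually.of_forall fun g => ?_)
      have := hwcbd c (shiftZ 1 g)
      rw [Real.norm_eq_abs, abs_le]
      constructor <;> [linarith [Nat.cast_nonneg (α := ℝ) c]; linarith]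
    have hwcTeq : ∀ c, ∫ g, (Wc c (shiftZ 1 g) : ℝ) ∂μ = ∫ g, (Wc c g : ℝ) ∂μ := by
      intro c
      conv_rhs => rw [← hpres 1]
      rw [integral_map (measurable_shiftZ 1).aemeasurable]
      exact ((hwcmeas c).aestronglyMeasurable).mono_ac
        (Measure.AbsolutelyContinuous.refl _)
    -- the comparison functions
    set φ : ℕ → (ℤ → ℤ) → ℝ :=
      fun c g => min ((g 0 : ℝ) + ind g) ((c : ℝ) - (Wc c (shiftZ 1 g) : ℝ)) with hφ
    have hφle : ∀ c g, φ c g ≤ (Wc c g : ℝ) - (Wc c (shiftZ 1 g) : ℝ) := by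
      intro c g
      have hkey := Wc_key c g
      have hkey' : ((min (c : ℤ) (g 0 + (if g ∈ Aset then (1:ℤ) else 0)
          + Wc c (shiftZ 1 g)) : ℤ) : ℝ) ≤ ((Wc c g : ℤ) : ℝ) := by exact_mod_cast hkey
      have hindeq : ind g = ((if g ∈ Aset then (1:ℤ) else 0 : ℤ) : ℝ) := by
        by_cases h : g ∈ Aset <;> simp [hind, h]
      push_cast at hkey'
      rcases le_total ((g 0 : ℝ) + ind g) ((c : ℝ) - (Wc c (shiftZ 1 g) : ℝ)) with h | h
      · rw [hφ]
        simp only [min_eq_left h]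
        have h2 : min ((c:ℝ)) ((g 0 : ℝ) + ind g + (Wc c (shiftZ 1 g) : ℝ))
            = (g 0 : ℝ) + ind g + (Wc c (shiftZ 1 g) : ℝ) := min_eq_right (by linarith)
        rw [hindeq] at h2 ⊢
        push_cast at h2 ⊢
        linarith [hkey', h2.symm.le.trans hkey']
      · rw [hφ]
        simp only [min_eq_right h]
        have h2 : min ((c:ℝ)) ((g 0 : ℝ) + ind g + (Wc c (shiftZ 1 g) : ℝ)) = (c:ℝ) :=
          min_eq_left (by linarith)
        rw [hindeq] at h2
        push_cast at h2
        linarith [h2.symm.le.trans hkey']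
    have hφmeas : ∀ c, Measurable (φ c) := by
      intro c
      exact ((hfmeas.add hindmeas).min (measurable_const.sub (hwcTmeas c)))
    have hφbd : ∀ c g, |φ c g| ≤ |(g 0 : ℝ)| + 1 := by
      intro c g
      have h1 := hind01 g
      have h2 := hwcbd c (shiftZ 1 g)
      rw [abs_le]
      constructor
      · refine le_min ?_ ?_
        · have : -|(g 0 : ℝ)| ≤ (g 0 : ℝ) := neg_abs_le _
          linarith
        · have : (0:ℝ) ≤ |(g 0 : ℝ)| := abs_nonneg _
          linarith
      · refine (min_le_left _ _).trans ?_
        have : (g 0 : ℝ) ≤ |(g 0 : ℝ)| := le_abs_self _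
        linarith
    have hφint : ∀ c, Integrable (φ c) μ := by
      intro c
      refine Integrable.mono' (hfint.abs.add (integrable_const 1))
        (hφmeas c).aestronglyMeasurable
        (Filter.Eventually.of_forall fun g => ?_)
      rw [Real.norm_eq_abs]
      exact hφbd c g
    have hφneg : ∀ c : ℕ, ∫ g, φ c g ∂μ ≤ 0 := by
      intro c
      have h1 : ∫ g, φ c g ∂μ ≤ ∫ g, ((Wc c g : ℝ) - (Wc c (shiftZ 1 g) : ℝ)) ∂μ :=
        integral_mono (hφint c) ((hwcint c).sub (hwcTint c))
          (fun g => hφle c g)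
      rw [integral_sub (hwcint c) (hwcTint c), hwcTeq c] at h1
      linarith
    -- dominated convergence
    have hlim : Tendsto (fun c : ℕ => ∫ g, φ c g ∂μ) atTop
        (𝓝 (∫ g, ((g 0 : ℝ) + ind g) ∂μ)) := by
      refine tendsto_integral_of_dominated_convergence (fun g => |(g 0 : ℝ)| + 1)
        (fun c => (hφmeas c).aestronglyMeasurable)
        (hfint.abs.add (integrable_const 1))
        (fun c => Filter.Eventually.of_forall fun g => by
          rw [Real.norm_eq_abs]; exact hφbd c g) ?_
      filter_upwards [haeD] with g hg
      have hgT : shiftZ 1 g ∈ Dset := by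
        have : g ∈ (shiftZ 1) ⁻¹' Dset := Dset_inv.symm ▸ hg
        exact this
      obtain ⟨M, hM0, hM⟩ := Dset_bound hgT
      have hWcle : ∀ c : ℕ, (Wc c (shiftZ 1 g) : ℝ) ≤ (M : ℝ) := by
        intro c
        exact_mod_cast Wc_le_bound c (shiftZ 1 g) hM hM0
      refine tendsto_const_nhds.congr' ?_
      rw [Filter.EventuallyEq, eventually_atTop]
      refine ⟨(M + |g 0| + 1).toNat, fun c hc => ?_⟩
      have hc' : (M : ℝ) + |(g 0 : ℝ)| + 1 ≤ (c : ℝ) := by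
        have h1 : ((M + |g 0| + 1 : ℤ) : ℝ) ≤ ((c : ℕ) : ℝ) := by
          have := Int.toNat_le.mp (le_refl (M + |g 0| + 1).toNat)
          have h2 : (M + |g 0| + 1 : ℤ) ≤ ((c:ℕ) : ℤ) := by
            have h3 : ((M + |g 0| + 1).toNat : ℤ) ≤ ((c:ℕ) : ℤ) := by exact_mod_cast hc
            have h4 : (M + |g 0| + 1 : ℤ) ≤ ((M + |g 0| + 1).toNat : ℤ) := Int.self_le_toNat _
            omega
          exact_mod_cast h2
        push_cast at h1
        linarith
      have h1 := hind01 g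
      have habs : (g 0 : ℝ) ≤ |(g 0 : ℝ)| := le_abs_self _
      have habs2 : |(g 0 : ℝ)| = ((|g 0| : ℤ) : ℝ) := by push_cast; rfl
      rw [hφ]
      symm
      apply min_eq_left
      have := hWcle c
      rw [habs2] at habs
      linarith
    have hfinal : ∫ g, ((g 0 : ℝ) + ind g) ∂μ ≤ 0 :=
      le_of_tendsto hlim (Filter.Eventually.of_forall hφneg)
    rw [integral_add hfint hindint, hfmean, hindval] at hfinal
    linarith
  -- now: almost surely no frozen point at any time
  have hAn : ∀ n : ℤ, μ ((shiftZ n) ⁻¹' Aset) = 0 := by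
    intro n
    rw [← Measure.map_apply (measurable_shiftZ n) measurable_Aset, hpres n]
    exact hA0
  have hHc : μ Hsetᶜ = 0 := by
    rw [Hset_compl]
    exact measure_iUnion_null hAn
  have hae : ∀ᵐ ω ∂ℙ, (fun n : ℤ => X n ω) ∈ Hset := by
    rw [ae_iff]
    have heq : {ω | ¬ (fun n : ℤ => X n ω) ∈ Hset}
        = (fun ω => fun n : ℤ => X n ω) ⁻¹' Hsetᶜ := rfl
    rw [heq, ← Measure.map_apply hXm measurable_Hset.compl, ← hμ]
    exact hHc
  filter_upwards [hae] with ω hω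
  exact ⟨fun i j => connect hω i j, component_infinite hω⟩
end

section
/- (Forward–Backward Lemma, abstract form.) Let G and T be metric spaces equipped with their Borel σ-algebras, let 𝒫 be a Borel probability measure on G, and let θ : G → G, Ψ : G → T and θ_F : T → T be Borel measurable maps satisfying Ψ ∘ θ = θ_F ∘ Ψ. For n ≥ 0 set 𝒫_n := (θ^n)_*𝒫 and 𝒬_n := (θ_F^n)_*(Ψ_*𝒫). Assume: (1) there is a Borel measurable map Φ : T → G such that for every n ≥ 0, Φ(Ψ(g)) = g for 𝒫_n-almost every g ∈ G; (2) the sequence (𝒬_n)_{n≥0} converges weakly to a Borel probability measure 𝒬_F on T; (3) Φ is continuous 𝒬_F-almost everywhere. Then (𝒫_n)_{n≥0} converges weakly to the push-forward measure Φ_*𝒬_F. -/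
/-!
Since `Ψ ∘ θ^n = θF^n ∘ Ψ` and `Φ ∘ Ψ = id` holds `𝒫_n`-a.e., each `𝒫_n` equals `Φ_*𝒬_n`, so
the claim is the continuous mapping theorem for the a.e. continuous map `Φ`. That theorem follows
from the closed-set form of the portmanteau theorem: for closed `F`, the closure of `Φ⁻¹ F` exceeds
`Φ⁻¹ F` only by discontinuity points of `Φ`, a `𝒬_F`-null set.
-/

open MeasureTheory Filter Topology

namespace MeasureTheory

lemma closure_preimage_ae_subset_preimage {X Y : Type*} [TopologicalSpace X]
    [MeasurableSpace X] [TopologicalSpace Y] {μ : Measure X} {f : X → Y}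
    (hcont : ∀ᵐ x ∂μ, ContinuousAt f x) {F : Set Y} (hF : IsClosed F) :
    closure (f ⁻¹' F) ≤ᵐ[μ] f ⁻¹' F := by
  filter_upwards [hcont] with x hx hmem
  have : f x ∈ closure (f '' (f ⁻¹' F)) := mem_closure_image hx hmem
  exact hF.closure_subset (closure_mono (Set.image_preimage_subset f F) this)

theorem ProbabilityMeasure.tendsto_map_of_tendsto_of_ae_continuousAt {X Y ι : Type*}
    [TopologicalSpace X] [MeasurableSpace X] [OpensMeasurableSpace X] [HasOuterApproxClosed X]
    [TopologicalSpace Y] [MeasurableSpace Y] [OpensMeasurableSpace Y]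
    {L : Filter ι} [L.IsCountablyGenerated] {μs : ι → ProbabilityMeasure X}
    {μ : ProbabilityMeasure X} (hμs : Tendsto μs L (𝓝 μ)) {f : X → Y} (hf : Measurable f)
    (hcont : ∀ᵐ x ∂(μ : Measure X), ContinuousAt f x) :
    Tendsto (fun i ↦ (μs i).map hf.aemeasurable) L (𝓝 (μ.map hf.aemeasurable)) := by
  refine tendsto_of_forall_isClosed_limsup_le' fun F hF ↦ ?_
  simp only [ProbabilityMeasure.toMeasure_map, Measure.map_apply hf hF.measurableSet]
  calc limsup (fun i ↦ (μs i : Measure X) (f ⁻¹' F)) L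
      ≤ limsup (fun i ↦ (μs i : Measure X) (closure (f ⁻¹' F))) L :=
        limsup_le_limsup (.of_forall fun i ↦ measure_mono subset_closure)
    _ ≤ (μ : Measure X) (closure (f ⁻¹' F)) :=
        ProbabilityMeasure.limsup_measure_closed_le_of_tendsto hμs isClosed_closure
    _ ≤ (μ : Measure X) (f ⁻¹' F) :=
        measure_mono_ae (closure_preimage_ae_subset_preimage hcont hF)

lemma Measure.map_iterate_map_of_semiconj {α β : Type*} [MeasurableSpace α] [MeasurableSpace β]
    {μ : Measure α} {θ : α → α} {Ψ : α → β} {θF : β → β} (hθ : Measurable θ)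
    (hΨ : Measurable Ψ) (hθF : Measurable θF) (h : Function.Semiconj Ψ θ θF) (n : ℕ) :
    (μ.map Ψ).map θF^[n] = (μ.map θ^[n]).map Ψ := by
  rw [Measure.map_map (hθF.iterate n) hΨ, Measure.map_map hΨ (hθ.iterate n),
    (h.iterate_right n).comp_eq]

lemma Measure.map_map_eq_self_of_ae_leftInverse {α β : Type*} [MeasurableSpace α]
    [MeasurableSpace β] {μ : Measure α} {Ψ : α → β} {Φ : β → α} (hΨ : Measurable Ψ)
    (hΦ : Measurable Φ) (h : ∀ᵐ x ∂μ, Φ (Ψ x) = x) : (μ.map Ψ).map Φ = μ := by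
  rw [Measure.map_map hΦ hΨ, Measure.map_congr (f := Φ ∘ Ψ) (g := id) h, Measure.map_id]

end MeasureTheory

/-- Forward–Backward Lemma, abstract form: given measurable maps `θ`, `Ψ`, `θF` with
`Ψ ∘ θ = θF ∘ Ψ`, a measurable left inverse `Φ` of `Ψ` (almost surely for each
push-forward `𝒫_n`), weak convergence of the push-forwards `𝒬_n = (θF^n)_*(Ψ_*𝒫)` to a
probability measure `QF`, and continuity of `Φ` `QF`-almost everywhere, the
push-forwards `𝒫_n = (θ^n)_*𝒫` converge weakly to `Φ_*QF`. -/
theorem forward_backward_lemma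
    {G T : Type*} [MetricSpace G] [MeasurableSpace G] [BorelSpace G]
    [MetricSpace T] [MeasurableSpace T] [BorelSpace T]
    (P : Measure G) [IsProbabilityMeasure P]
    (θ : G → G) (Ψ : G → T) (θF : T → T)
    (hθ : Measurable θ) (hΨ : Measurable Ψ) (hθF : Measurable θF)
    (hcomm : Ψ ∘ θ = θF ∘ Ψ)
    (Φ : T → G) (hΦ : Measurable Φ)
    (h1 : ∀ n : ℕ, ∀ᵐ g ∂(Measure.map (θ^[n]) P), Φ (Ψ g) = g)
    (QF : Measure T) [IsProbabilityMeasure QF]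
    (h2 : ∀ f : BoundedContinuousFunction T ℝ,
      Tendsto (fun n : ℕ => ∫ t, f t ∂(Measure.map (θF^[n]) (Measure.map Ψ P))) atTop
        (𝓝 (∫ t, f t ∂QF)))
    (h3 : ∀ᵐ t ∂QF, ContinuousAt Φ t) :
    ∀ f : BoundedContinuousFunction G ℝ,
      Tendsto (fun n : ℕ => ∫ g, f g ∂(Measure.map (θ^[n]) P)) atTop
        (𝓝 (∫ g, f g ∂(Measure.map Φ QF))) := by
  let P' : ProbabilityMeasure G := ⟨P, inferInstance⟩
  let QF' : ProbabilityMeasure T := ⟨QF, inferInstance⟩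
  have hQn : Tendsto (fun n ↦ (P'.map (hθ.iterate n).aemeasurable).map hΨ.aemeasurable) atTop
      (𝓝 QF') := by
    simp only [ProbabilityMeasure.tendsto_iff_forall_integral_tendsto,
      ProbabilityMeasure.toMeasure_map]
    simpa [P', QF', Measure.map_iterate_map_of_semiconj hθ hΨ hθF (congrFun hcomm)] using h2
  have hPn := ProbabilityMeasure.tendsto_iff_forall_integral_tendsto.mp
    (ProbabilityMeasure.tendsto_map_of_tendsto_of_ae_continuousAt hQn hΦ h3)
  simp only [ProbabilityMeasure.toMeasure_map] at hPn
  simpa [P', QF', Measure.map_map_eq_self_of_ae_leftInverse hΨ hΦ (h1 _)] using hPn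
end
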